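/- For all real ℓ > 0, the inequality 2ℓ / (sinh(ℓ/2) · arsinh(1/sinh(ℓ/2))^2) < ℓ · e^{ℓ} / (2 · sinh(ℓ/2)) holds. -/

import Mathlib

/-!
Put `t = ℓ / 2` and `w = exp (-t)`. After cancelling the positive factor `ℓ / (2 sinh t)`, the
inequality says `4 / a² < exp ℓ = w⁻²` for `a = arsinh (1 / sinh t)`, i.e. `2 w < a`. The identity
`sinh (2 artanh w) = 2 w / (1 - w²) = 1 / sinh t` gives `a = 2 artanh w`, and `w < artanh w`
because the power series of `artanh` has positive coefficients.
-/

open Set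

namespace Real

theorem two_mul_lt_log_one_add_sub_log_one_sub {x : ℝ} (hx₀ : 0 < x) (hx₁ : x < 1) :
    2 * x < log (1 + x) - log (1 - x) := by
  have hseries := hasSum_log_sub_log_of_abs_lt_one (abs_lt.2 ⟨by linarith, hx₁⟩)
  have hpartial := sum_le_hasSum (Finset.range 2) (fun k _ => by positivity) hseries
  simp only [Finset.sum_range_succ, Finset.sum_range_zero] at hpartial
  norm_num at hpartial
  nlinarith [pow_pos hx₀ 3]

theorem lt_artanh {x : ℝ} (hx₀ : 0 < x) (hx₁ : x < 1) : x < artanh x := by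
  rw [artanh_eq_half_log ⟨by linarith, hx₁.le⟩, log_div (by linarith) (by linarith)]
  linarith [two_mul_lt_log_one_add_sub_log_one_sub hx₀ hx₁]

theorem sinh_two_mul_artanh {x : ℝ} (hx : x ∈ Ioo (-1) 1) :
    sinh (2 * artanh x) = 2 * x / (1 - x ^ 2) := by
  have h : 0 < 1 - x ^ 2 := by nlinarith [hx.1, hx.2]
  rw [sinh_two_mul, sinh_artanh hx, cosh_artanh hx]
  field_simp
  rw [sq_sqrt h.le]

theorem arsinh_one_div_sinh {t : ℝ} (ht : 0 < t) :
    arsinh (1 / sinh t) = 2 * artanh (exp (-t)) := by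
  have hw : exp (-t) ∈ Ioo (-1) 1 := ⟨by linarith [exp_pos (-t)], exp_lt_one_iff.2 (by linarith)⟩
  suffices 1 / sinh t = sinh (2 * artanh (exp (-t))) by rw [this, arsinh_sinh]
  have hinv : exp t * exp (-t) = 1 := by rw [← exp_add, add_neg_cancel, exp_zero]
  have hsub : 0 < exp t - exp (-t) := by linarith [exp_lt_exp.2 (show -t < t by linarith)]
  have hw₂ : 0 < 1 - exp (-t) ^ 2 := by nlinarith [hw.1, hw.2]
  rw [sinh_two_mul_artanh hw, sinh_eq]
  field_simp
  linear_combination -hinv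

theorem two_mul_exp_neg_lt_arsinh_one_div_sinh {t : ℝ} (ht : 0 < t) :
    2 * exp (-t) < arsinh (1 / sinh t) := by
  rw [arsinh_one_div_sinh ht]
  linarith [lt_artanh (exp_pos (-t)) (exp_lt_one_iff.2 (by linarith))]

end Real

theorem stmt_3 (ℓ : ℝ) (hℓ : 0 < ℓ) :
    2 * ℓ / (Real.sinh (ℓ / 2) * (Real.arsinh (1 / Real.sinh (ℓ / 2))) ^ 2) <
      ℓ * Real.exp ℓ / (2 * Real.sinh (ℓ / 2)) := by
  set a := Real.arsinh (1 / Real.sinh (ℓ / 2))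
  have hs : 0 < Real.sinh (ℓ / 2) := Real.sinh_pos_iff.2 (by positivity)
  have ha : 2 * Real.exp (-(ℓ / 2)) < a :=
    Real.two_mul_exp_neg_lt_arsinh_one_div_sinh (by positivity)
  have hkey : 4 / a ^ 2 < Real.exp ℓ :=
    calc 4 / a ^ 2 < 4 / (2 * Real.exp (-(ℓ / 2))) ^ 2 := by gcongr
      _ = Real.exp ℓ := by
        rw [mul_pow, ← Real.exp_nat_mul, div_eq_iff (by positivity), mul_left_comm,
          ← Real.exp_add]
        norm_num
        ring
  calc 2 * ℓ / (Real.sinh (ℓ / 2) * a ^ 2) = ℓ / (2 * Real.sinh (ℓ / 2)) * (4 / a ^ 2) := by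
        field_simp; ring
    _ < ℓ / (2 * Real.sinh (ℓ / 2)) * Real.exp ℓ := by gcongr
    _ = ℓ * Real.exp ℓ / (2 * Real.sinh (ℓ / 2)) := by ring
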